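/- arXiv:math-ph/9905020 — 2 statements merged into one kernel-verified Lean document; each statement's English description precedes it below -/
import Mathlib

section
/- Let μ(z)=z^{(1−M)/2} e^{−(ζ/4)(z+1/z)} and define the operator conjugation H_g = μ^{-1}∘H∘μ followed by the change of variable z=e^{2x}, where H = −d²/dx² + (ζ cosh 2x − M)². Then H_g(z) = −4(z d/dz − (M−1)/2)² + 2ζ(z² d/dz −(M−1)z) − 2ζ d/dz + M² + ζ², i.e. H_g = −4J₀² + 2ζJ₊ − 2ζJ₋ + (n+1)² + ζ² with n=M−1. -/
open Real

noncomputable def Paux (ζ M : ℝ) (t : ℝ) : ℝ :=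
  (1 - M) * t - ζ/4 * (Real.exp (2*t) + Real.exp (-(2*t)))

noncomputable def P1aux (ζ M : ℝ) (t : ℝ) : ℝ :=
  (1 - M) - ζ/2 * (Real.exp (2*t) - Real.exp (-(2*t)))

noncomputable def Psi1 (ζ M : ℝ) (g : ℝ → ℝ) (t : ℝ) : ℝ :=
  Real.exp (Paux ζ M t) *
    (P1aux ζ M t * g (Real.exp (2*t)) + 2 * Real.exp (2*t) * deriv g (Real.exp (2*t)))

/-- Under the change of variable `z = e^{2x}` and the gauge transformation
by `μ(z) = z^{(1-M)/2} e^{-(ζ/4)(z + 1/z)}`, the Razavy Hamiltonian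
`H = -d²/dx² + (ζ cosh 2x - M)²` becomes the gauge Hamiltonian
`H_g = -4(z d/dz - (M-1)/2)² + 2ζ(z² d/dz - (M-1)z) - 2ζ d/dz + M² + ζ²`,
i.e. `H_g = -4J₀² + 2ζJ₊ - 2ζJ₋ + (n+1)² + ζ²` with `n = M - 1`:
for every smooth `g` (a function of `z`), setting `ψ(x) = μ(e^{2x}) g(e^{2x})`,
one has `(Hψ)(x) = μ(e^{2x}) (H_g g)(e^{2x})` for all real `x`. -/
theorem stmt_14 (ζ : ℝ) (hζ : 0 < ζ) (M : ℕ) (hM : 1 ≤ M)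
    (μ : ℝ → ℝ)
    (hμ : ∀ z : ℝ, 0 < z →
      μ z = z ^ ((1 - (M : ℝ)) / 2) * Real.exp (-(ζ / 4) * (z + 1 / z)))
    (J0 : (ℝ → ℝ) → (ℝ → ℝ))
    (hJ0 : ∀ f : ℝ → ℝ, ∀ z : ℝ,
      J0 f z = z * deriv f z - (((M : ℝ) - 1) / 2) * f z)
    (Hg : (ℝ → ℝ) → (ℝ → ℝ))
    (hHg : ∀ f : ℝ → ℝ, ∀ z : ℝ,
      Hg f z = -4 * J0 (J0 f) z
        + 2 * ζ * (z ^ 2 * deriv f z - ((M : ℝ) - 1) * z * f z)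
        - 2 * ζ * deriv f z + ((M : ℝ) ^ 2 + ζ ^ 2) * f z)
    (g : ℝ → ℝ) (hg : ContDiff ℝ (⊤ : ℕ∞) g)
    (ψ : ℝ → ℝ)
    (hψ : ∀ x : ℝ, ψ x = μ (Real.exp (2 * x)) * g (Real.exp (2 * x))) :
    ∀ x : ℝ,
      -(deriv (deriv ψ) x) + (ζ * Real.cosh (2 * x) - (M : ℝ)) ^ 2 * ψ x
        = μ (Real.exp (2 * x)) * Hg g (Real.exp (2 * x)) := by
  intro x
  have hgd : Differentiable ℝ g := hg.differentiable (by simp)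
  have hgd' : Differentiable ℝ (deriv g) :=
    ((contDiff_infty_iff_deriv.mp (hg.of_le (by simp))).2).differentiable (by simp)
  -- μ along the change of variables
  have hμE : ∀ t : ℝ, μ (Real.exp (2*t)) = Real.exp (Paux ζ M t) := by
    intro t
    have h1 : (1:ℝ)/Real.exp (2*t) = Real.exp (-(2*t)) := by
      rw [Real.exp_neg]; exact (one_div _)
    rw [hμ _ (Real.exp_pos _), Real.rpow_def_of_pos (Real.exp_pos _), Real.log_exp, h1,
      ← Real.exp_add]
    congr 1
    simp only [Paux]; ring
  have hψeq : ψ = fun t => Real.exp (Paux ζ M t) * g (Real.exp (2*t)) := by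
    funext t
    rw [show (2:ℝ) * t = 2*t from rfl] at *
    rw [hψ t, hμE t]
  -- basic derivatives
  have hE : ∀ y : ℝ, HasDerivAt (fun t => Real.exp (2*t)) (2 * Real.exp (2*y)) y := by
    intro y
    have h : HasDerivAt (fun t:ℝ => 2*t) 2 y := by simpa using (hasDerivAt_id y).const_mul (2:ℝ)
    simpa [mul_comm] using h.exp
  have hEn : ∀ y : ℝ, HasDerivAt (fun t => Real.exp (-(2*t))) (-2 * Real.exp (-(2*y))) y := by
    intro y
    have h : HasDerivAt (fun t:ℝ => -(2*t)) (-2) y := by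
      simpa [Pi.neg_def] using ((hasDerivAt_id y).const_mul (2:ℝ)).neg
    have h2 := h.exp
    convert h2 using 1
    ring
  have hP : ∀ y : ℝ, HasDerivAt (Paux ζ M) (P1aux ζ M y) y := by
    intro y
    have h1 : HasDerivAt (fun t:ℝ => (1-(M:ℝ))*t) (1-(M:ℝ)) y := by
      simpa using (hasDerivAt_id y).const_mul (1-(M:ℝ))
    have h2 := ((hE y).add (hEn y)).const_mul (ζ/4)
    have h3 := h1.sub h2
    have h4 : HasDerivAt (Paux ζ M)
        ((1-(M:ℝ)) - ζ/4 * (2 * Real.exp (2*y) + -2 * Real.exp (-(2*y)))) y := h3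
    convert h4 using 1
    simp only [P1aux]; ring
  have hP1 : ∀ y : ℝ, HasDerivAt (P1aux ζ M)
      (-(ζ/2) * (2 * Real.exp (2*y) + 2 * Real.exp (-(2*y)))) y := by
    intro y
    have h2 := (((hE y).sub (hEn y)).const_mul (ζ/2)).neg
    have h3 := (hasDerivAt_const y (1-(M:ℝ))).add h2
    have h4 : HasDerivAt (P1aux ζ M)
        (0 + -(ζ/2 * (2 * Real.exp (2*y) - -2 * Real.exp (-(2*y))))) y := by
      convert h3 using 1
      all_goals (try rfl)
      all_goals (funext t; simp only [P1aux, Pi.add_apply, Pi.neg_apply, Pi.sub_apply]; ring)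
    convert h4 using 1
    ring
  have hDg : ∀ y : ℝ, HasDerivAt (fun t => g (Real.exp (2*t)))
      (deriv g (Real.exp (2*y)) * (2 * Real.exp (2*y))) y := by
    intro y
    exact ((hgd (Real.exp (2*y))).hasDerivAt).comp y (hE y)
  have hDg' : ∀ y : ℝ, HasDerivAt (fun t => deriv g (Real.exp (2*t)))
      (deriv (deriv g) (Real.exp (2*y)) * (2 * Real.exp (2*y))) y := by
    intro y
    exact ((hgd' (Real.exp (2*y))).hasDerivAt).comp y (hE y)
  -- first derivative of ψ
  have hDψ : ∀ y : ℝ, HasDerivAt ψ (Psi1 ζ M g y) y := by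
    intro y
    rw [hψeq]
    have h := ((hP y).exp).mul (hDg y)
    convert h using 1
    all_goals (try rfl)
    all_goals (try funext t)
    all_goals (simp only [Psi1, Pi.mul_apply]; try ring)
  have hd1 : deriv ψ = Psi1 ζ M g := funext fun y => (hDψ y).deriv
  -- second derivative of ψ at x
  have hQ : HasDerivAt (fun t => P1aux ζ M t * g (Real.exp (2*t))
        + 2 * Real.exp (2*t) * deriv g (Real.exp (2*t)))
      ((-(ζ/2) * (2 * Real.exp (2*x) + 2 * Real.exp (-(2*x)))) * g (Real.exp (2*x))
        + P1aux ζ M x * (deriv g (Real.exp (2*x)) * (2 * Real.exp (2*x)))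
        + ((2 * (2 * Real.exp (2*x))) * deriv g (Real.exp (2*x))
          + (2 * Real.exp (2*x)) * (deriv (deriv g) (Real.exp (2*x)) * (2 * Real.exp (2*x))))) x := by
    have h1 := (hP1 x).mul (hDg x)
    have h2 := ((hE x).const_mul (2:ℝ)).mul (hDg' x)
    convert h1.add h2 using 1
    all_goals (try rfl)
  have hDΨ1 : HasDerivAt (Psi1 ζ M g)
      (Real.exp (Paux ζ M x) * P1aux ζ M x *
          (P1aux ζ M x * g (Real.exp (2*x)) + 2 * Real.exp (2*x) * deriv g (Real.exp (2*x)))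
        + Real.exp (Paux ζ M x) * ((-(ζ/2) * (2 * Real.exp (2*x) + 2 * Real.exp (-(2*x)))) * g (Real.exp (2*x))
          + P1aux ζ M x * (deriv g (Real.exp (2*x)) * (2 * Real.exp (2*x)))
          + ((2 * (2 * Real.exp (2*x))) * deriv g (Real.exp (2*x))
            + (2 * Real.exp (2*x)) * (deriv (deriv g) (Real.exp (2*x)) * (2 * Real.exp (2*x)))))) x := by
    exact ((hP x).exp).mul hQ
  have hd2 : deriv (deriv ψ) x
      = Real.exp (Paux ζ M x) * P1aux ζ M x *
          (P1aux ζ M x * g (Real.exp (2*x)) + 2 * Real.exp (2*x) * deriv g (Real.exp (2*x)))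
        + Real.exp (Paux ζ M x) * ((-(ζ/2) * (2 * Real.exp (2*x) + 2 * Real.exp (-(2*x)))) * g (Real.exp (2*x))
          + P1aux ζ M x * (deriv g (Real.exp (2*x)) * (2 * Real.exp (2*x)))
          + ((2 * (2 * Real.exp (2*x))) * deriv g (Real.exp (2*x))
            + (2 * Real.exp (2*x)) * (deriv (deriv g) (Real.exp (2*x)) * (2 * Real.exp (2*x))))) := by
    rw [hd1]; exact hDΨ1.deriv
  -- the gauge Hamiltonian side
  set z : ℝ := Real.exp (2*x) with hz
  have hJg : J0 g = fun u => u * deriv g u - (((M:ℝ)-1)/2) * g u := funext fun u => hJ0 g u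
  have hdJg : deriv (J0 g) z
      = (1 * deriv g z + z * deriv (deriv g) z) - (((M:ℝ)-1)/2) * deriv g z := by
    rw [hJg]
    have h := ((hasDerivAt_id z).mul ((hgd' z).hasDerivAt)).sub
      (((hgd z).hasDerivAt).const_mul (((M:ℝ)-1)/2))
    exact h.deriv
  have hzx : Real.exp (2 * x) = z := rfl
  have hwz : Real.exp (-(2*x)) = z⁻¹ := by rw [Real.exp_neg]
  have hzpos : (0:ℝ) < z := Real.exp_pos _
  have hcosh : Real.cosh (2*x) = (z + z⁻¹)/2 := by
    rw [Real.cosh_eq, hwz]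
  rw [hψ x, hHg, hJ0 (J0 g), hJ0 g, hzx, hμE x, hd2, hdJg, hcosh]
  simp only [P1aux]
  rw [hwz]
  have hzne : z ≠ 0 := ne_of_gt hzpos
  field_simp
  ring
end

section
/- Let χ(z)=Σ_{k=0}^{M−1} c_k z^k be a polynomial eigenfunction of H_g = −4J₀² + 2ζJ₊ − 2ζJ₋ + M² + ζ² (with n=M−1) with eigenvalue E. Writing c_k = (−1)^k P_k/( (2ζ)^k k! ), the coefficients P_k satisfy P_{k+1}=(E−b_k)P_k − a_k P_{k−1} with a_k=4k(M−k)ζ² and b_k=4k(M−1−k)+2M−1+ζ², and the truncation at degree M−1 forces P_M(E)=0. -/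
/-!
In the monomial basis `J₀` is diagonal, `J₊` raises and `J₋` lowers the degree by one, so
comparing the coefficients of `zᵏ` in `H_g χ = E χ` gives a three-term relation between
`c_{k-1}, c_k, c_{k+1}`, whose diagonal entry `-4 (k - (M-1)/2)² + M² + ζ²` is `b_k`.
The weights `(-1)ᵏ (2ζ)ᵏ k!` are chosen so that this relation becomes monic in `P_{k+1}`.
Since `deg χ ≤ M - 1`, the relation at `k = M - 1` has `P_M = 0`.
-/

open Polynomial

theorem Polynomial.coeff_X_mul_derivative {R : Type*} [CommRing R] (p : R[X]) (k : ℕ) :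
    (X * derivative p).coeff k = k * p.coeff k := by
  cases k with
  | zero => simp
  | succ k => rw [coeff_X_mul, coeff_derivative]; push_cast; ring

noncomputable section

namespace SlTwoHamiltonian

variable {K : Type*} [Field K]

-- `weightOp M` and `raiseOp M` are `J₀` and `J₊` of the spin-`(M-1)/2` representation; `J₋` is
-- `derivative`.
def weightOp (M : ℕ) (p : K[X]) : K[X] := X * derivative p - C (((M : K) - 1) / 2) * p

def raiseOp (M : ℕ) (p : K[X]) : K[X] := X ^ 2 * derivative p - C ((M : K) - 1) * (X * p)

def hamiltonian (M : ℕ) (ζ : K) (p : K[X]) : K[X] :=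
  (-4 : K) • weightOp M (weightOp M p) + (2 * ζ) • raiseOp M p - (2 * ζ) • derivative p
    + ((M : K) ^ 2 + ζ ^ 2) • p

def diagCoeff (M : ℕ) (ζ : K) (k : ℕ) : K := 4 * k * ((M : K) - 1 - k) + 2 * M - 1 + ζ ^ 2

def offDiagCoeff (M : ℕ) (ζ : K) (k : ℕ) : K := 4 * k * ((M : K) - k) * ζ ^ 2

def scaledCoeff (ζ : K) (p : K[X]) (k : ℕ) : K := (-1) ^ k * (2 * ζ) ^ k * k.factorial * p.coeff k

theorem coeff_weightOp (M : ℕ) (p : K[X]) (k : ℕ) :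
    (weightOp M p).coeff k = (k - ((M : K) - 1) / 2) * p.coeff k := by
  rw [weightOp, coeff_sub, coeff_X_mul_derivative, coeff_C_mul]; ring

theorem coeff_raiseOp_zero (M : ℕ) (p : K[X]) : (raiseOp M p).coeff 0 = 0 := by
  simp [raiseOp, pow_two, mul_assoc]

theorem coeff_raiseOp_succ (M : ℕ) (p : K[X]) (k : ℕ) :
    (raiseOp M p).coeff (k + 1) = (k + 1 - M) * p.coeff k := by
  rw [raiseOp, pow_two, mul_assoc, mul_left_comm (C _), ← mul_sub, coeff_X_mul, coeff_sub,
    coeff_X_mul_derivative, coeff_C_mul]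
  ring

variable [NeZero (2 : K)]

theorem coeff_hamiltonian_zero (M : ℕ) (ζ : K) (p : K[X]) :
    (hamiltonian M ζ p).coeff 0 = diagCoeff M ζ 0 * p.coeff 0 - 2 * ζ * p.coeff 1 := by
  simp only [hamiltonian, diagCoeff, coeff_add, coeff_sub, coeff_smul, smul_eq_mul,
    coeff_weightOp, coeff_raiseOp_zero, coeff_derivative]
  field_simp
  ring

theorem coeff_hamiltonian_succ (M : ℕ) (ζ : K) (p : K[X]) (k : ℕ) :
    (hamiltonian M ζ p).coeff (k + 1) = diagCoeff M ζ (k + 1) * p.coeff (k + 1)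
      + 2 * ζ * (k + 1 - M) * p.coeff k - 2 * ζ * (k + 2) * p.coeff (k + 2) := by
  simp only [hamiltonian, diagCoeff, coeff_add, coeff_sub, coeff_smul, smul_eq_mul,
    coeff_weightOp, coeff_raiseOp_succ, coeff_derivative]
  push_cast
  field_simp
  ring

-- At `k = 0` the truncated `k - 1` is `0`; the term vanishes anyway since `offDiagCoeff M ζ 0 = 0`.
theorem scaledCoeff_recurrence {M : ℕ} {ζ E : K} {p : K[X]} (hp : hamiltonian M ζ p = C E * p)
    (k : ℕ) : scaledCoeff ζ p (k + 1) =
      (E - diagCoeff M ζ k) * scaledCoeff ζ p k - offDiagCoeff M ζ k * scaledCoeff ζ p (k - 1) := by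
  have hk : (hamiltonian M ζ p).coeff k = E * p.coeff k := by rw [hp, coeff_C_mul]
  cases k with
  | zero =>
    rw [coeff_hamiltonian_zero] at hk
    simp only [scaledCoeff, offDiagCoeff]
    push_cast
    linear_combination hk
  | succ j =>
    rw [coeff_hamiltonian_succ] at hk
    simp only [scaledCoeff, offDiagCoeff, Nat.add_sub_cancel, Nat.factorial_succ, pow_succ]
    push_cast
    linear_combination (-1) ^ j * (2 * ζ) ^ j * (-(2 * ζ)) * (j + 1) * j.factorial * hk

end SlTwoHamiltonian

end

open SlTwoHamiltonian

theorem stmt_15_general (ζ : ℝ) (M : ℕ) (E : ℂ)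
    (Jm J0 Jp : Polynomial ℂ → Polynomial ℂ)
    (hJm : ∀ p, Jm p = derivative p)
    (hJ0 : ∀ p, J0 p = X * derivative p - C (((M : ℂ) - 1) / 2) * p)
    (hJp : ∀ p, Jp p = X ^ 2 * derivative p - C ((M : ℂ) - 1) * (X * p))
    (Hg : Polynomial ℂ → Polynomial ℂ)
    (hHg : ∀ p, Hg p = (-4 : ℂ) • J0 (J0 p) + (2 * (ζ : ℂ)) • Jp p
      - (2 * (ζ : ℂ)) • Jm p + ((M : ℂ) ^ 2 + (ζ : ℂ) ^ 2) • p)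
    (χ : Polynomial ℂ) (hχdeg : χ.natDegree ≤ M - 1)
    (heig : Hg χ = C E * χ)
    (a b : ℕ → ℂ)
    (ha : ∀ k : ℕ, a k = 4 * k * ((M : ℂ) - k) * (ζ : ℂ) ^ 2)
    (hb : ∀ k : ℕ, b k = 4 * k * ((M : ℂ) - 1 - k) + 2 * M - 1 + (ζ : ℂ) ^ 2)
    (P : ℕ → ℂ)
    (hP : ∀ k : ℕ, P k = (-1) ^ k * (2 * (ζ : ℂ)) ^ k * (k.factorial : ℂ)
      * χ.coeff k) :
    (∀ k : ℕ, k < M → P (k + 1) = (E - b k) * P k - a k * P (k - 1)) ∧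
      (E - b (M - 1)) * P (M - 1) - a (M - 1) * P (M - 2) = 0 := by
  have hH : Hg = hamiltonian M (ζ : ℂ) := funext fun p => by rw [hHg, hJ0, hJ0, hJp, hJm]; rfl
  have hP' : P = scaledCoeff (ζ : ℂ) χ := funext hP
  have ha' : a = offDiagCoeff M (ζ : ℂ) := funext ha
  have hb' : b = diagCoeff M (ζ : ℂ) := funext hb
  subst hH hP' ha' hb'
  have recurrence := scaledCoeff_recurrence heig
  refine ⟨fun k _ => recurrence k, ?_⟩
  have htop : scaledCoeff (ζ : ℂ) χ (M - 1 + 1) = 0 := by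
    rw [scaledCoeff, coeff_eq_zero_of_natDegree_lt (by omega), mul_zero]
  rw [show M - 2 = M - 1 - 1 by omega, ← recurrence, htop]

/-- Let `χ(z) = Σ_{k=0}^{M-1} c_k z^k` be a polynomial eigenfunction of
`H_g = -4J₀² + 2ζJ₊ - 2ζJ₋ + M² + ζ²` (with `n = M-1`) with eigenvalue `E`.
Writing `c_k = (-1)^k P_k / ((2ζ)^k k!)`, the coefficients `P_k` satisfy
`P_{k+1} = (E - b_k) P_k - a_k P_{k-1}` with `a_k = 4k(M-k)ζ²` and
`b_k = 4k(M-1-k) + 2M - 1 + ζ²`, and the truncation at degree `M-1` forces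
`P_M(E) = 0`, i.e. `(E - b_{M-1}) P_{M-1} - a_{M-1} P_{M-2} = 0`. -/
theorem stmt_15 (ζ : ℝ) (hζ : 0 < ζ) (M : ℕ) (hM : 1 ≤ M) (E : ℂ)
    (Jm J0 Jp : Polynomial ℂ → Polynomial ℂ)
    (hJm : ∀ p, Jm p = derivative p)
    (hJ0 : ∀ p, J0 p = X * derivative p - C (((M : ℂ) - 1) / 2) * p)
    (hJp : ∀ p, Jp p = X ^ 2 * derivative p - C ((M : ℂ) - 1) * (X * p))
    (Hg : Polynomial ℂ → Polynomial ℂ)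
    (hHg : ∀ p, Hg p = (-4 : ℂ) • J0 (J0 p) + (2 * (ζ : ℂ)) • Jp p
      - (2 * (ζ : ℂ)) • Jm p + ((M : ℂ) ^ 2 + (ζ : ℂ) ^ 2) • p)
    (χ : Polynomial ℂ) (hχdeg : χ.natDegree ≤ M - 1)
    (heig : Hg χ = C E * χ)
    (a b : ℕ → ℂ)
    (ha : ∀ k : ℕ, a k = 4 * k * ((M : ℂ) - k) * (ζ : ℂ) ^ 2)
    (hb : ∀ k : ℕ, b k = 4 * k * ((M : ℂ) - 1 - k) + 2 * M - 1 + (ζ : ℂ) ^ 2)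
    (P : ℕ → ℂ)
    (hP : ∀ k : ℕ, P k = (-1) ^ k * (2 * (ζ : ℂ)) ^ k * (k.factorial : ℂ)
      * χ.coeff k) :
    (∀ k : ℕ, k < M → P (k + 1) = (E - b k) * P k - a k * P (k - 1)) ∧
      (E - b (M - 1)) * P (M - 1) - a (M - 1) * P (M - 2) = 0 :=
  stmt_15_general ζ M E Jm J0 Jp hJm hJ0 hJp Hg hHg χ hχdeg heig a b ha hb P hP
end
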